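/- arXiv:math/0606155 — 4 statements merged into one kernel-verified Lean document; each statement's English description precedes it below -/
import Mathlib

section
/- Let H be a normal subgroup of G with φ(H) ⊆ H and |G/H| = N < ∞. For g ∈ G, let τ_g φ' : H → H be h ↦ g φ(h) g⁻¹ (assumed to map H to H). Then the number of (τ_g φ')-twisted conjugacy classes in H satisfies R(τ_g φ') ≤ N · R(φ). -/
private def twRel {G : Type*} [Group G] (f : G →* G) : G → G → Prop :=
  fun x y => ∃ t, y = t * x * (f t)⁻¹

private theorem twRel_equiv {G : Type*} [Group G] (f : G →* G) : Equivalence (twRel f) := by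
  refine ⟨fun x => ⟨1, by simp⟩, ?_, ?_⟩
  · rintro x y ⟨t, rfl⟩
    exact ⟨t⁻¹, by simp [mul_assoc]⟩
  · rintro x y z ⟨t, rfl⟩ ⟨s, rfl⟩
    exact ⟨s * t, by simp [mul_assoc]⟩

private theorem twRel_mk_eq {G : Type*} [Group G] (f : G →* G) {a b : G} :
    Quot.mk (twRel f) a = Quot.mk (twRel f) b ↔ twRel f a b := by
  rw [Quot.eq]
  exact (twRel_equiv f).eqvGen_iff

theorem reidemeister_number_subgroup_bound {G : Type*} [Group G] (H : Subgroup G) [H.Normal]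
    (φ : G →* G) (hφ : ∀ h ∈ H, φ h ∈ H)
    (N : ℕ) (hN : H.index = N) (hNpos : 0 < N)
    (g : G) (ψ : H →* H) (hψ : ∀ h : H, (ψ h : G) = g * φ h * g⁻¹)
    (hfin : Finite (Quot (fun x y : G => ∃ t : G, y = t * x * φ t⁻¹))) :
    Finite (Quot (fun x y : H => ∃ t : H, y = t * x * (ψ t)⁻¹)) ∧
    Nat.card (Quot (fun x y : H => ∃ t : H, y = t * x * (ψ t)⁻¹)) ≤
      N * Nat.card (Quot (fun x y : G => ∃ t : G, y = t * x * φ t⁻¹)) := by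
  classical
  have hrelG : (fun x y : G => ∃ t : G, y = t * x * φ t⁻¹) = twRel φ := by
    funext x y; simp [twRel]
  have hrelH : (fun x y : H => ∃ t : H, y = t * x * (ψ t)⁻¹) = twRel ψ := rfl
  rw [hrelG] at hfin ⊢
  rw [hrelH]
  have hmap : ∀ x y : H, twRel ψ x y → twRel φ ((x : G) * g) ((y : G) * g) := by
    rintro x y ⟨t, rfl⟩
    refine ⟨(t : G), ?_⟩
    have := hψ t
    push_cast [this]
    group
  let α : Quot (twRel ψ) → Quot (twRel φ) := Quot.map (fun x : H => (x : G) * g) hmap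
  have key : ∀ u : Quot (twRel ψ), ∃ t : G,
      ((Quot.out u : H) : G) * g = t * Quot.out (α u) * (φ t)⁻¹ := by
    intro u
    have h1 : α u = Quot.mk (twRel φ) ((Quot.out u : H) * g) := by
      conv_lhs => rw [← Quot.out_eq u]
      rfl
    have h2 : Quot.mk (twRel φ) (Quot.out (α u)) = Quot.mk (twRel φ) (((Quot.out u : H) : G) * g) := by
      rw [Quot.out_eq, h1]
    exact (twRel_mk_eq φ).mp h2
  choose t ht using key
  let F : Quot (twRel ψ) → Quot (twRel φ) × (G ⧸ H) :=
    fun u => (α u, QuotientGroup.mk (t u)⁻¹)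
  have hF : Function.Injective F := by
    intro u v huv
    have h1 : α u = α v := congrArg Prod.fst huv
    have h2 : t u * (t v)⁻¹ ∈ H := by
      have h2' : (QuotientGroup.mk (t u)⁻¹ : G ⧸ H) = QuotientGroup.mk (t v)⁻¹ :=
        congrArg Prod.snd huv
      rw [QuotientGroup.eq] at h2'
      simpa using h2'
    have e1 := ht u
    have e2 := ht v
    rw [h1] at e1
    have e2' : Quot.out (α v) = (t v)⁻¹ * (((Quot.out v : H) : G) * g) * φ (t v) := by
      rw [e2]; group
    rw [e2'] at e1
    set s : H := ⟨t u * (t v)⁻¹, h2⟩ with hs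
    have hrel : twRel ψ (Quot.out v) (Quot.out u) := by
      refine ⟨s, Subtype.ext ?_⟩
      have hψs := hψ s
      have hscoe : (s : G) = t u * (t v)⁻¹ := rfl
      push_cast [hψs, hscoe]
      have e1' : ((Quot.out u : H) : G) =
          (t u * ((t v)⁻¹ * (((Quot.out v : H) : G) * g) * φ (t v)) * (φ (t u))⁻¹) * g⁻¹ := by
        rw [eq_mul_inv_iff_mul_eq, e1]
      rw [e1']
      simp only [map_mul, map_inv]
      group
    have : Quot.mk (twRel ψ) (Quot.out v) = Quot.mk (twRel ψ) (Quot.out u) :=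
      Quot.sound hrel
    rw [Quot.out_eq, Quot.out_eq] at this
    exact this.symm
  have hcard : Nat.card (G ⧸ H) = N := by
    rw [← Subgroup.index_eq_card]; exact hN
  have hGHfin : Finite (G ⧸ H) := Nat.finite_of_card_ne_zero (by omega)
  have hfinH : Finite (Quot (twRel ψ)) := Finite.of_injective F hF
  refine ⟨hfinH, ?_⟩
  calc Nat.card (Quot (twRel ψ)) ≤ Nat.card (Quot (twRel φ) × (G ⧸ H)) :=
        Nat.card_le_card_of_injective F hF
    _ = Nat.card (Quot (twRel φ)) * Nat.card (G ⧸ H) := Nat.card_prod _ _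
    _ = N * Nat.card (Quot (twRel φ)) := by rw [hcard, Nat.mul_comm]
end

section
/- Let φ : G → G be an endomorphism of a group G and H ≤ G a subgroup with φ(H) ⊆ H, such that for every x ∈ G there exists n ∈ ℕ with φⁿ(x) ∈ H. Then the map sending the φ_H-twisted conjugacy class of x ∈ H to the φ-twisted conjugacy class of x in G is a bijection between the Reidemeister classes of φ_H = φ|_H and the Reidemeister classes of φ; in particular R(φ) = R(φ_H). -/
theorem reidemeister_classes_restriction_bijective {G : Type*} [Group G] (φ : G →* G)
    (H : Subgroup G) (hφ : ∀ h ∈ H, φ h ∈ H)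
    (φH : H →* H) (hres : ∀ h : H, (φH h : G) = φ (h : G))
    (hev : ∀ x : G, ∃ n : ℕ, (⇑φ)^[n] x ∈ H) :
    ∃ F : Quot (fun x y : H => ∃ t : H, y = t * x * (φH t)⁻¹) →
        Quot (fun x y : G => ∃ g : G, y = g * x * φ g⁻¹),
      (∀ h : H, F (Quot.mk _ h) = Quot.mk _ (h : G)) ∧ Function.Bijective F ∧
      Nat.card (Quot (fun x y : G => ∃ g : G, y = g * x * φ g⁻¹)) =
        Nat.card (Quot (fun x y : H => ∃ t : H, y = t * x * (φH t)⁻¹)) := by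
  classical
  set rH : H → H → Prop := fun x y => ∃ t : H, y = t * x * (φH t)⁻¹ with hrHdef
  set rG : G → G → Prop := fun x y => ∃ g : G, y = g * x * φ g⁻¹ with hrGdef
  have hiter : ∀ (n : ℕ) (x : H), (((⇑φH)^[n] x : H) : G) = (⇑φ)^[n] (x : G) := by
    intro n
    induction n with
    | zero => intro x; rfl
    | succ n ih =>
      intro x
      rw [Function.iterate_succ_apply', Function.iterate_succ_apply', hres, ih]
  have equivG : Equivalence rG := by
    constructor
    · intro x; exact ⟨1, by simp⟩
    · rintro x y ⟨g, rfl⟩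
      refine ⟨g⁻¹, ?_⟩
      simp [mul_assoc]
    · rintro x y z ⟨g, rfl⟩ ⟨k, rfl⟩
      refine ⟨k * g, ?_⟩
      simp [mul_assoc]
  have equivH : Equivalence rH := by
    constructor
    · intro x; exact ⟨1, by simp⟩
    · rintro x y ⟨t, rfl⟩
      refine ⟨t⁻¹, ?_⟩
      simp [mul_assoc]
    · rintro x y z ⟨t, rfl⟩ ⟨s, rfl⟩
      refine ⟨s * t, ?_⟩
      simp [mul_assoc]
  -- the lifted map
  have compat : ∀ x y : H, rH x y →
      Quot.mk rG (x : G) = Quot.mk rG (y : G) := by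
    rintro x y ⟨t, rfl⟩
    apply Quot.sound
    refine ⟨(t : G), ?_⟩
    push_cast [hres]
    rw [map_inv]
  have hinj : Function.Injective (Quot.lift (fun h : H => Quot.mk rG (h : G)) compat) := by
    intro a b hab
    obtain ⟨x, rfl⟩ := Quot.exists_rep a
    obtain ⟨y, rfl⟩ := Quot.exists_rep b
    have h1 : Quot.mk rG (x : G) = Quot.mk rG (y : G) := hab
    have h2 : rG (x : G) (y : G) := (Equivalence.eqvGen_iff equivG).mp (Quot.eq.mp h1)
    obtain ⟨g, hg⟩ := h2
    obtain ⟨n, hn⟩ := hev g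
    -- z ~_H φH^[m] z for all z, m
    have step1 : ∀ (m : ℕ) (z : H), Quot.mk rH z = Quot.mk rH ((⇑φH)^[m] z) := by
      intro m z
      induction m with
      | zero => rfl
      | succ k ih =>
        rw [ih, Function.iterate_succ_apply']
        apply Quot.sound
        refine ⟨((⇑φH)^[k] z)⁻¹, ?_⟩
        simp
    -- φH^[n] x ~_H φH^[n] y
    have hgn : (⇑φ)^[n] (y : G) = (⇑φ)^[n] g * (⇑φ)^[n] (x : G) * φ (((⇑φ)^[n] g)⁻¹) := by
      rw [hg]
      rw [iterate_map_mul, iterate_map_mul]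
      congr 1
      rw [← Function.iterate_succ_apply, Function.iterate_succ_apply',
        iterate_map_inv]
    have step2 : Quot.mk rH ((⇑φH)^[n] x) = Quot.mk rH ((⇑φH)^[n] y) := by
      apply Quot.sound
      refine ⟨⟨(⇑φ)^[n] g, hn⟩, ?_⟩
      apply Subtype.ext
      push_cast [hiter, hres]
      simpa using hgn
    rw [step1 n x, step2, ← step1 n y]
  have hsurj : Function.Surjective (Quot.lift (fun h : H => Quot.mk rG (h : G)) compat) := by
    intro b
    obtain ⟨x, rfl⟩ := Quot.exists_rep b
    obtain ⟨n, hn⟩ := hev x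
    have key : ∀ (m : ℕ) (z : G), Quot.mk rG z = Quot.mk rG ((⇑φ)^[m] z) := by
      intro m z
      induction m with
      | zero => rfl
      | succ k ih =>
        rw [ih, Function.iterate_succ_apply']
        apply Quot.sound
        refine ⟨((⇑φ)^[k] z)⁻¹, ?_⟩
        simp
    exact ⟨Quot.mk rH ⟨(⇑φ)^[n] x, hn⟩, by simpa using (key n x).symm⟩
  exact ⟨Quot.lift (fun h : H => Quot.mk rG (h : G)) compat, fun h => rfl, ⟨hinj, hsurj⟩,
    (Nat.card_eq_of_bijective _ ⟨hinj, hsurj⟩).symm⟩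
end

section
/- Under the hypotheses φ(H) ⊆ H and ∀x∃n φⁿ(x) ∈ H, every φ-twisted conjugacy class of G has non-empty intersection with H, and this intersection is a single φ_H-twisted conjugacy class of H. -/
section aux
variable {G : Type*} [Group G] (φ : G →* G)

private lemma tc_comp {x y z a b : G} (hy : y = a * x * φ a⁻¹)
    (hz : z = b * y * φ b⁻¹) : z = (b * a) * x * φ (b * a)⁻¹ := by
  subst hy hz; simp [map_mul, map_inv, mul_assoc]

private lemma tc_symm {x y a : G} (hy : y = a * x * φ a⁻¹) :
    x = a⁻¹ * y * φ (a⁻¹)⁻¹ := by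
  subst hy; simp [map_mul, map_inv, mul_assoc]

private lemma tc_step (x : G) : φ x = x⁻¹ * x * φ (x⁻¹)⁻¹ := by simp

private lemma tc_iter (x : G) : ∀ n : ℕ, ∃ c : G, (⇑φ)^[n] x = c * x * φ c⁻¹
  | 0 => ⟨1, by simp⟩
  | n+1 => by
    obtain ⟨c, hc⟩ := tc_iter x n
    refine ⟨((⇑φ)^[n] x)⁻¹ * c, tc_comp φ hc ?_⟩
    rw [Function.iterate_succ_apply']
    exact tc_step φ _

private lemma iter_mem {H : Subgroup G} (hφ : ∀ h ∈ H, φ h ∈ H) :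
    ∀ n : ℕ, ∀ a ∈ H, (⇑φ)^[n] a ∈ H
  | 0, a, ha => ha
  | n+1, a, ha => by
    rw [Function.iterate_succ_apply']
    exact hφ _ (iter_mem hφ n a ha)

private lemma tc_iter_conj (a x : G) (n : ℕ) :
    (⇑φ)^[n] (a * x * φ a⁻¹) =
      (⇑φ)^[n] a * (⇑φ)^[n] x * φ ((⇑φ)^[n] a)⁻¹ := by
  rw [iterate_map_mul, iterate_map_mul]
  congr 1
  have : (⇑φ)^[n] (φ a⁻¹) = φ ((⇑φ)^[n] a⁻¹) := by
    rw [← Function.iterate_succ_apply, Function.iterate_succ_apply']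
  rw [this, iterate_map_inv]

private lemma tcH_iter {H : Subgroup G} (hφ : ∀ h ∈ H, φ h ∈ H) {a : G} (ha : a ∈ H) :
    ∀ n : ℕ, ∃ t ∈ H, (⇑φ)^[n] a = t * a * φ t⁻¹
  | 0 => ⟨1, one_mem H, by simp⟩
  | n+1 => by
    obtain ⟨t, htH, ht⟩ := tcH_iter hφ ha n
    refine ⟨((⇑φ)^[n] a)⁻¹ * t, mul_mem (inv_mem (iter_mem φ hφ n a ha)) htH,
      tc_comp φ ht ?_⟩
    rw [Function.iterate_succ_apply']
    exact tc_step φ _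

private lemma tc_in_H {H : Subgroup G} (hφ : ∀ h ∈ H, φ h ∈ H)
    (hev : ∀ x : G, ∃ n : ℕ, (⇑φ)^[n] x ∈ H)
    {h y g : G} (hh : h ∈ H) (hy : y ∈ H) (hg : y = g * h * φ g⁻¹) :
    ∃ t ∈ H, y = t * h * φ t⁻¹ := by
  obtain ⟨n, hn⟩ := hev g
  have key : (⇑φ)^[n] y = (⇑φ)^[n] g * (⇑φ)^[n] h * φ ((⇑φ)^[n] g)⁻¹ := by
    rw [hg]; exact tc_iter_conj φ g h n
  obtain ⟨t1, ht1H, ht1⟩ := tcH_iter φ hφ hh n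
  obtain ⟨t2, ht2H, ht2⟩ := tcH_iter φ hφ hy n
  -- φ^[n] y = ((φ^[n] g) * t1) * h * φ(...)⁻¹
  have step1 : (⇑φ)^[n] y = ((⇑φ)^[n] g * t1) * h * φ ((⇑φ)^[n] g * t1)⁻¹ :=
    tc_comp φ ht1 key
  have step2 : y = (t2⁻¹ * ((⇑φ)^[n] g * t1)) * h * φ (t2⁻¹ * ((⇑φ)^[n] g * t1))⁻¹ :=
    tc_comp φ step1 (tc_symm φ ht2)
  exact ⟨_, mul_mem (inv_mem ht2H) (mul_mem hn ht1H), step2⟩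

end aux

theorem twisted_class_meets_subgroup {G : Type*} [Group G] (φ : G →* G)
    (H : Subgroup G) (hφ : ∀ h ∈ H, φ h ∈ H)
    (φH : H →* H) (hres : ∀ h : H, (φH h : G) = φ (h : G))
    (hev : ∀ x : G, ∃ n : ℕ, (⇑φ)^[n] x ∈ H) (x : G) :
    ({y : G | ∃ g : G, y = g * x * φ g⁻¹} ∩ (H : Set G)).Nonempty ∧
    ∃ h : H, {y : G | ∃ g : G, y = g * x * φ g⁻¹} ∩ (H : Set G) =
      (fun k : H => (k : G)) '' {k : H | ∃ t : H, k = t * h * (φH t)⁻¹} := by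
  obtain ⟨n, hn⟩ := hev x
  obtain ⟨c, hc⟩ := tc_iter φ x n
  refine ⟨⟨(⇑φ)^[n] x, ⟨c, hc⟩, hn⟩, ⟨(⇑φ)^[n] x, hn⟩, ?_⟩
  ext y
  constructor
  · rintro ⟨⟨a, ha⟩, hyH⟩
    -- y = (a * c⁻¹) * (φ^[n] x) * φ (a*c⁻¹)⁻¹
    have hyh : y = (a * c⁻¹) * (⇑φ)^[n] x * φ (a * c⁻¹)⁻¹ :=
      tc_comp φ (tc_symm φ hc) ha
    obtain ⟨t, htH, ht⟩ := tc_in_H φ hφ hev hn hyH hyh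
    refine ⟨⟨y, hyH⟩, ⟨⟨t, htH⟩, ?_⟩, rfl⟩
    apply Subtype.ext
    push_cast [hres]
    rw [ht, map_inv]
  · rintro ⟨k, ⟨t, htk⟩, rfl⟩
    have hk : (k : G) = (t : G) * (⇑φ)^[n] x * φ (t : G)⁻¹ := by
      rw [htk]; push_cast [hres]; rw [map_inv]
    exact ⟨⟨(t : G) * c, tc_comp φ hc hk⟩, k.2⟩
end

section
/- Let φ : G → G be an endomorphism and n ∈ ℕ. If H = φⁿ(G) (the image subgroup), then φ(H) ⊆ H and every element x ∈ G satisfies φⁿ(x) ∈ H; consequently R(φ) = R(φ|_H). -/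
theorem reidemeister_number_image_subgroup {G : Type*} [Group G] (φ : G →* G) (n : ℕ)
    (φn : G →* G) (hφn : ∀ x : G, φn x = (⇑φ)^[n] x) :
    (∀ h ∈ φn.range, φ h ∈ φn.range) ∧ (∀ x : G, (⇑φ)^[n] x ∈ φn.range) ∧
    ∀ (φH : φn.range →* φn.range), (∀ h : φn.range, (φH h : G) = φ (h : G)) →
      Nat.card (Quot (fun x y : G => ∃ g : G, y = g * x * φ g⁻¹)) =
        Nat.card (Quot (fun x y : φn.range => ∃ t : φn.range, y = t * x * (φH t)⁻¹)) := by
  have memN : ∀ x : G, (⇑φ)^[n] x ∈ φn.range := fun x => ⟨x, (hφn x)⟩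
  have hcomm : ∀ (m : ℕ) (x : G), φ ((⇑φ)^[m] x) = (⇑φ)^[m] (φ x) := fun m x => by
    rw [← Function.iterate_succ_apply' φ m x, Function.iterate_succ_apply φ m x]
  refine ⟨?_, memN, ?_⟩
  · rintro h ⟨y, rfl⟩
    rw [hφn, hcomm, ← hφn]
    exact ⟨φ y, rfl⟩
  · intro φH hφH
    set r : G → G → Prop := fun x y : G => ∃ g : G, y = g * x * φ g⁻¹ with hr
    set s : φn.range → φn.range → Prop :=
      fun x y : φn.range => ∃ t : φn.range, y = t * x * (φH t)⁻¹ with hs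
    -- one step: x ~ φ x
    have stepG : ∀ x : G, Quot.mk r (φ x) = Quot.mk r x := fun x =>
      (Quot.sound ⟨x⁻¹, by simp⟩).symm
    have iterG : ∀ (m : ℕ) (x : G), Quot.mk r ((⇑φ)^[m] x) = Quot.mk r x := by
      intro m
      induction m with
      | zero => intro x; rfl
      | succ k ih =>
        intro x
        rw [Function.iterate_succ_apply' φ k x, stepG, ih]
    have stepH : ∀ h : φn.range, Quot.mk s (φH h) = Quot.mk s h := fun h =>
      (Quot.sound ⟨h⁻¹, by simp⟩).symm
    have iterH : ∀ (m : ℕ) (h : φn.range), Quot.mk s ((⇑φH)^[m] h) = Quot.mk s h := by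
      intro m
      induction m with
      | zero => intro h; rfl
      | succ k ih =>
        intro h
        rw [Function.iterate_succ_apply' φH k h, stepH, ih]
    have coeIter : ∀ (m : ℕ) (h : φn.range), ((⇑φH)^[m] h : G) = (⇑φ)^[m] (h : G) := by
      intro m
      induction m with
      | zero => intro h; rfl
      | succ k ih =>
        intro h
        rw [Function.iterate_succ_apply' φH k h, hφH, ih,
          ← Function.iterate_succ_apply' φ k (h : G)]
    -- maps
    have toHresp : ∀ x y : G, r x y →
        Quot.mk s ⟨(⇑φ)^[n] x, memN x⟩ = Quot.mk s ⟨(⇑φ)^[n] y, memN y⟩ := by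
      rintro x y ⟨g, rfl⟩
      refine Quot.sound ⟨⟨(⇑φ)^[n] g, memN g⟩, ?_⟩
      apply Subtype.ext
      push_cast [hφH]
      show (⇑φ)^[n] (g * x * φ g⁻¹) = (⇑φ)^[n] g * (⇑φ)^[n] x * (φ ((⇑φ)^[n] g))⁻¹
      rw [hcomm]
      simp only [← hφn, map_mul, map_inv]
    have toGresp : ∀ a b : φn.range, s a b →
        Quot.mk r (a : G) = Quot.mk r (b : G) := by
      rintro a b ⟨t, rfl⟩
      refine Quot.sound ⟨(t : G), ?_⟩
      push_cast [← hφH t⁻¹]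
      simp [hφH]
    refine Nat.card_congr
      ⟨Quot.lift (fun x => Quot.mk s ⟨(⇑φ)^[n] x, memN x⟩) toHresp,
       Quot.lift (fun h => Quot.mk r (h : G)) toGresp, ?_, ?_⟩
    · intro q
      induction q using Quot.ind with
      | _ x => exact iterG n x
    · intro q
      induction q using Quot.ind with
      | _ h =>
        have : (⟨(⇑φ)^[n] (h : G), memN _⟩ : φn.range) = (⇑φH)^[n] h :=
          Subtype.ext (coeIter n h).symm
        show Quot.mk s ⟨(⇑φ)^[n] (h : G), memN _⟩ = Quot.mk s h
        rw [this, iterH]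
end
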